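/- For the normalized m-th elementary symmetric function E_m and a symmetric n×n real matrix A, ∑_{i,j} (∂E_m/∂A_j^i)·(A²)_j^i = n·E_1(A)·E_m(A) − (n−m)·E_{m+1}(A), where (A²)_j^i = ∑_k A_j^k A_k^i. -/

import Mathlib

open Matrix

attribute [local instance] Matrix.normedAddCommGroup Matrix.normedSpace

/-- The normalized `m`-th elementary symmetric function of (the eigenvalues of) an
`n × n` real matrix `A`, via characteristic polynomial coefficients, normalized by
`C(n,m)`.  In particular `E_m = 0` for `m > n`, by convention. -/
noncomputable def normEsymm (n m : ℕ) (A : Matrix (Fin n) (Fin n) ℝ) : ℝ :=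
  ((-1 : ℝ) ^ m * A.charpoly.coeff (n - m)) / (n.choose m)

section Aux
open Polynomial
variable {n : ℕ}


lemma diff_entry (i j : Fin n) :
    Differentiable ℝ (fun A : Matrix (Fin n) (Fin n) ℝ => A i j) := by
  have : (fun A : Matrix (Fin n) (Fin n) ℝ => A i j) =
      ((ContinuousLinearMap.proj j : (Fin n → ℝ) →L[ℝ] ℝ).comp
        (ContinuousLinearMap.proj i : (Fin n → (Fin n → ℝ)) →L[ℝ] (Fin n → ℝ))) := rfl
  rw [this]
  exact ContinuousLinearMap.differentiable _

lemma diff_coeff_prod {ι : Type*} [DecidableEq ι] (s : Finset ι)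
    (f : ι → Matrix (Fin n) (Fin n) ℝ → Polynomial ℝ)
    (h : ∀ i ∈ s, ∀ k, Differentiable ℝ fun A => (f i A).coeff k) :
    ∀ k, Differentiable ℝ fun A => (∏ i ∈ s, f i A).coeff k := by
  classical
  induction s using Finset.induction with
  | empty =>
    intro k
    simp only [Finset.prod_empty, Polynomial.coeff_one]
    exact differentiable_const _
  | @insert a s ha ih =>
    intro k
    have hrest := ih (fun i hi => h i (Finset.mem_insert_of_mem hi))
    have hfa := h a (Finset.mem_insert_self a s)
    simp only [Finset.prod_insert ha, Polynomial.coeff_mul]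
    exact Differentiable.fun_sum fun x _ => (hfa x.1).mul (hrest x.2)

lemma diff_charpoly_coeff (k : ℕ) :
    Differentiable ℝ (fun A : Matrix (Fin n) (Fin n) ℝ => A.charpoly.coeff k) := by
  classical
  have hent : ∀ (i j : Fin n) (k : ℕ),
      Differentiable ℝ fun A : Matrix (Fin n) (Fin n) ℝ => (charmatrix A i j).coeff k := by
    intro i j k
    have : (fun A : Matrix (Fin n) (Fin n) ℝ => (charmatrix A i j).coeff k) =
        fun A => ((Matrix.diagonal fun _ : Fin n => (X : ℝ[X])) i j).coeff k
          - (if k = 0 then A i j else 0) := by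
      funext A
      rw [charmatrix_apply, Polynomial.coeff_sub, Polynomial.coeff_C]
    rw [this]
    rcases eq_or_ne k 0 with hk | hk
    · simp only [hk, if_true]
      exact (differentiable_const _).sub (diff_entry i j)
    · simp only [hk, if_false]
      exact (differentiable_const _).sub (differentiable_const _)
  have : (fun A : Matrix (Fin n) (Fin n) ℝ => A.charpoly.coeff k) =
      fun A => ∑ σ : Equiv.Perm (Fin n),
        (Equiv.Perm.sign σ : ℤ) • (∏ i, charmatrix A (σ i) i).coeff k := by
    funext A
    simp only [Matrix.charpoly, Matrix.det_apply, Polynomial.finset_sum_coeff,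
      Polynomial.coeff_smul, Units.smul_def]
  rw [this]
  exact Differentiable.fun_sum fun σ _ =>
    ((diff_coeff_prod Finset.univ (fun i A => charmatrix A (σ i) i)
      (fun i _ k => hent (σ i) i k)) k).fun_const_smul _

lemma diff_normEsymm (n m : ℕ) : Differentiable ℝ (normEsymm n m) := by
  have : normEsymm n m = fun A => ((-1 : ℝ) ^ m * A.charpoly.coeff (n - m)) * ((n.choose m : ℝ))⁻¹ := by
    funext A; rw [normEsymm, div_eq_mul_inv]
  rw [this]
  exact (((diff_charpoly_coeff (n - m)).const_mul _).mul_const _)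

lemma charpoly_conj_aux {U V M : Matrix (Fin n) (Fin n) ℝ} (h1 : U * V = 1) :
    (U * M * V).charpoly = M.charpoly := by
  have hC : ∀ P Q : Matrix (Fin n) (Fin n) ℝ,
      (C : ℝ →+* ℝ[X]).mapMatrix (P * Q)
        = (C : ℝ →+* ℝ[X]).mapMatrix P * (C : ℝ →+* ℝ[X]).mapMatrix Q :=
    fun P Q => map_mul _ P Q
  have hchar : charmatrix (U * M * V)
      = (C : ℝ →+* ℝ[X]).mapMatrix U * charmatrix M * (C : ℝ →+* ℝ[X]).mapMatrix V := by
    have hsc : (Matrix.scalar (Fin n) (X : ℝ[X])) = (X : ℝ[X]) • (1 : Matrix (Fin n) (Fin n) ℝ[X]) := by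
      ext i j
      by_cases h : i = j <;>
        simp [Matrix.scalar_apply, Matrix.smul_apply, Matrix.one_apply, h]
    rw [charmatrix, charmatrix, mul_sub, sub_mul, hsc]
    congr 1
    · rw [mul_smul_comm, smul_mul_assoc, mul_one, ← hC, h1, _root_.map_one]
    · rw [hC, hC]
  have hdet1 : ((C : ℝ →+* ℝ[X]).mapMatrix U).det * ((C : ℝ →+* ℝ[X]).mapMatrix V).det = 1 := by
    rw [← Matrix.det_mul, ← hC, h1, _root_.map_one, Matrix.det_one]
  rw [Matrix.charpoly, Matrix.charpoly, hchar, Matrix.det_mul, Matrix.det_mul,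
    mul_right_comm, hdet1, one_mul]

lemma charpoly_diagonal (d : Fin n → ℝ) :
    (Matrix.diagonal d).charpoly = ∏ i, (X - C (d i)) := by
  have : charmatrix (Matrix.diagonal d) = Matrix.diagonal (fun i => (X : ℝ[X]) - C (d i)) := by
    ext i j
    rcases eq_or_ne i j with rfl | hij
    · simp [charmatrix_apply_eq]
    · simp [charmatrix_apply_ne _ _ _ hij, Matrix.diagonal_apply_ne _ hij]
  rw [Matrix.charpoly, this, Matrix.det_diagonal]

lemma normEsymm_diagonal (m : ℕ) (d : Fin n → ℝ) :
    normEsymm n m (Matrix.diagonal d)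
      = (∑ S ∈ Finset.powersetCard m Finset.univ, ∏ i ∈ S, d i) / (n.choose m) := by
  rcases le_or_gt m n with hm | hm
  · rw [normEsymm, charpoly_diagonal]
    have hprod : (∏ i, ((X : ℝ[X]) - C (d i)))
        = ((Finset.univ.val.map d).map fun t => X - C t).prod := by
      rw [Multiset.map_map]; rfl
    have hcard : Multiset.card (Finset.univ.val.map d) = n := by
      simp
    have hle : n - m ≤ Multiset.card (Finset.univ.val.map d) := by
      rw [hcard]; omega
    rw [hprod, Multiset.prod_X_sub_C_coeff _ hle, hcard, Nat.sub_sub_self hm]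
    rw [Finset.esymm_map_val]
    rw [← mul_assoc, ← pow_add, Even.neg_one_pow ⟨m, by ring⟩, one_mul]
  · have h0 : Finset.powersetCard m (Finset.univ : Finset (Fin n)) = ∅ := by
      rw [Finset.powersetCard_eq_empty]
      simpa using hm
    simp [normEsymm, Nat.choose_eq_zero_of_lt hm, h0]

lemma key_identity (m : ℕ) (d : Fin n → ℝ) :
    ∑ S ∈ Finset.powersetCard m (Finset.univ : Finset (Fin n)),
        ∑ i ∈ S, (∏ j ∈ S.erase i, d j) * (d i * d i)
      = (∑ i, d i) * (∑ S ∈ Finset.powersetCard m Finset.univ, ∏ i ∈ S, d i)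
        - ((m : ℝ) + 1) * (∑ T ∈ Finset.powersetCard (m+1) Finset.univ, ∏ i ∈ T, d i) := by
  classical
  have step1 : ∑ S ∈ Finset.powersetCard m (Finset.univ : Finset (Fin n)),
      ∑ i ∈ S, (∏ j ∈ S.erase i, d j) * (d i * d i)
      = ∑ S ∈ Finset.powersetCard m (Finset.univ : Finset (Fin n)),
          ∑ i ∈ S, d i * ∏ j ∈ S, d j := by
    refine Finset.sum_congr rfl fun S _ => Finset.sum_congr rfl fun i hi => ?_
    rw [← Finset.prod_erase_mul S d hi]
    ring
  have step2 : (∑ i, d i) * (∑ S ∈ Finset.powersetCard m (Finset.univ : Finset (Fin n)), ∏ i ∈ S, d i)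
      = (∑ S ∈ Finset.powersetCard m (Finset.univ : Finset (Fin n)), ∑ i ∈ S, d i * ∏ j ∈ S, d j)
        + ∑ S ∈ Finset.powersetCard m (Finset.univ : Finset (Fin n)), ∑ i ∈ Sᶜ, d i * ∏ j ∈ S, d j := by
    rw [Finset.mul_sum, ← Finset.sum_add_distrib]
    refine Finset.sum_congr rfl fun S _ => ?_
    rw [← Finset.sum_mul, ← Finset.sum_mul, ← add_mul]
    congr 1
    exact (Finset.sum_add_sum_compl S d).symm
  have step3 : ∑ S ∈ Finset.powersetCard m (Finset.univ : Finset (Fin n)), ∑ i ∈ Sᶜ, d i * ∏ j ∈ S, d j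
      = ∑ T ∈ Finset.powersetCard (m+1) (Finset.univ : Finset (Fin n)), ∑ i ∈ T, ∏ j ∈ T, d j := by
    have : ∀ S ∈ Finset.powersetCard m (Finset.univ : Finset (Fin n)),
        ∑ i ∈ Sᶜ, d i * ∏ j ∈ S, d j = ∑ i ∈ Sᶜ, ∏ j ∈ insert i S, d j := by
      intro S _
      refine Finset.sum_congr rfl fun i hi => ?_
      rw [Finset.prod_insert (Finset.mem_compl.mp hi)]
    rw [Finset.sum_congr rfl this, Finset.sum_sigma', Finset.sum_sigma']
    refine Finset.sum_nbij' (i := fun x => ⟨insert x.2 x.1, x.2⟩)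
      (j := fun y => ⟨y.1.erase y.2, y.2⟩) ?_ ?_ ?_ ?_ ?_
    · rintro ⟨S, i⟩ hx
      rw [Finset.mem_sigma] at hx ⊢
      obtain ⟨hS, hi⟩ := hx
      have hiS : i ∉ S := Finset.mem_compl.mp hi
      refine ⟨?_, Finset.mem_insert_self _ _⟩
      rw [Finset.mem_powersetCard] at hS ⊢
      exact ⟨Finset.subset_univ _, by rw [Finset.card_insert_of_notMem hiS, hS.2]⟩
    · rintro ⟨T, i⟩ hy
      rw [Finset.mem_sigma] at hy ⊢
      obtain ⟨hT, hi⟩ := hy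
      refine ⟨?_, Finset.mem_compl.mpr (Finset.notMem_erase _ _)⟩
      rw [Finset.mem_powersetCard] at hT ⊢
      exact ⟨Finset.subset_univ _, by rw [Finset.card_erase_of_mem hi, hT.2]; rfl⟩
    · rintro ⟨S, i⟩ hx
      rw [Finset.mem_sigma] at hx
      have hiS : i ∉ S := Finset.mem_compl.mp hx.2
      simp [Finset.erase_insert hiS]
    · rintro ⟨T, i⟩ hy
      rw [Finset.mem_sigma] at hy
      simp [Finset.insert_erase hy.2]
    · rintro ⟨S, i⟩ _
      rfl
  have step5 : ∑ T ∈ Finset.powersetCard (m+1) (Finset.univ : Finset (Fin n)), ∑ i ∈ T, ∏ j ∈ T, d j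
      = ((m : ℝ) + 1) * ∑ T ∈ Finset.powersetCard (m+1) Finset.univ, ∏ i ∈ T, d i := by
    rw [Finset.mul_sum]
    refine Finset.sum_congr rfl fun T hT => ?_
    rw [Finset.sum_const, (Finset.mem_powersetCard.mp hT).2, nsmul_eq_mul]
    push_cast
    ring
  rw [step1, step2, ← step3, ← step5] at *
  ring

lemma normEsymm_eigen (k : ℕ) (A : Matrix (Fin n) (Fin n) ℝ) (hH : A.IsHermitian) :
    normEsymm n k A
      = (∑ S ∈ Finset.powersetCard k Finset.univ, ∏ i ∈ S, hH.eigenvalues i) / (n.choose k) := by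
  have hU : (hH.eigenvectorUnitary : Matrix (Fin n) (Fin n) ℝ)
      * star (hH.eigenvectorUnitary : Matrix (Fin n) (Fin n) ℝ) = 1 :=
    Matrix.mem_unitaryGroup_iff.mp (hH.eigenvectorUnitary).2
  have hspec : A = (hH.eigenvectorUnitary : Matrix (Fin n) (Fin n) ℝ)
      * Matrix.diagonal hH.eigenvalues
      * star (hH.eigenvectorUnitary : Matrix (Fin n) (Fin n) ℝ) := by
    simpa [RCLike.ofReal_real_eq_id] using hH.spectral_theorem
  have : normEsymm n k A = normEsymm n k (Matrix.diagonal hH.eigenvalues) := by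
    conv_lhs => rw [hspec]
    unfold normEsymm
    rw [charpoly_conj_aux hU]
  rw [this, normEsymm_diagonal]

end Aux

/-- For the normalized `m`-th elementary symmetric function `E_m` and a
symmetric `n × n` real matrix `A`,
`∑_{i,j} (∂E_m/∂A_j^i)·(A²)_j^i = n·E_1(A)·E_m(A) − (n−m)·E_{m+1}(A)`,
where `(A²)_j^i = ∑_k A_j^k A_k^i`. -/
theorem contraction_derivative_Esymm_sq (n m : ℕ) (A : Matrix (Fin n) (Fin n) ℝ)
    (hA : A.IsSymm) :
    ∑ i : Fin n, ∑ j : Fin n,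
        (fderiv ℝ (normEsymm n m) A) (Matrix.single j i 1) * (A * A) j i
      = n * normEsymm n 1 A * normEsymm n m A
        - ((n : ℝ) - (m : ℝ)) * normEsymm n (m + 1) A := by
  classical
  rcases Nat.eq_zero_or_pos n with rfl | hn
  · simp [normEsymm, Nat.choose_eq_zero_of_lt (Nat.succ_pos m)]
  have hH : A.IsHermitian := by
    rw [Matrix.IsHermitian, Matrix.conjTranspose_eq_transpose_of_trivial]; exact hA
  set U : Matrix (Fin n) (Fin n) ℝ := (hH.eigenvectorUnitary : Matrix (Fin n) (Fin n) ℝ) with hUdef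
  set d : Fin n → ℝ := hH.eigenvalues with hddef
  have hUV : U * star U = 1 := Matrix.mem_unitaryGroup_iff.mp (hH.eigenvectorUnitary).2
  have hVU : star U * U = 1 := Matrix.UnitaryGroup.star_mul_self (hH.eigenvectorUnitary)
  have hspec : A = U * Matrix.diagonal d * star U := by
    simpa [RCLike.ofReal_real_eq_id] using hH.spectral_theorem
  -- A² in diagonalized form
  have hAsq : A * A = U * Matrix.diagonal (fun i => d i * d i) * star U := by
    rw [hspec]
    rw [show U * Matrix.diagonal d * star U * (U * Matrix.diagonal d * star U)
        = U * (Matrix.diagonal d * (star U * U) * Matrix.diagonal d) * star U by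
      noncomm_ring]
    rw [hVU, mul_one, Matrix.diagonal_mul_diagonal]
  have hline : ∀ t : ℝ, A + t • (A * A)
      = U * Matrix.diagonal (fun i => d i + t * (d i * d i)) * star U := by
    intro t
    have : Matrix.diagonal (fun i => d i + t * (d i * d i))
        = Matrix.diagonal d + t • Matrix.diagonal (fun i => d i * d i) := by
      ext i j
      by_cases h : i = j <;> simp [Matrix.diagonal_apply, h]
    rw [this, Matrix.mul_add, Matrix.add_mul, ← hspec, Matrix.mul_smul, Matrix.smul_mul, ← hAsq]
  -- explicit derivative of the path
  set c : ℝ := (n.choose m : ℝ) with hcdef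
  set L : ℝ := (∑ S ∈ Finset.powersetCard m (Finset.univ : Finset (Fin n)),
      ∑ i ∈ S, (∏ j ∈ S.erase i, d j) * (d i * d i)) / c with hLdef
  have hexp : HasDerivAt (fun t : ℝ => normEsymm n m (A + t • (A * A))) L 0 := by
    have hfun : (fun t : ℝ => normEsymm n m (A + t • (A * A)))
        = fun t : ℝ => (∑ S ∈ Finset.powersetCard m (Finset.univ : Finset (Fin n)),
            ∏ i ∈ S, (d i + t * (d i * d i))) / c := by
      funext t
      rw [hline t]
      have : normEsymm n m (U * Matrix.diagonal (fun i => d i + t * (d i * d i)) * star U)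
          = normEsymm n m (Matrix.diagonal (fun i => d i + t * (d i * d i))) := by
        unfold normEsymm
        rw [charpoly_conj_aux hUV]
      rw [this, normEsymm_diagonal]
    rw [hfun, hLdef]
    apply HasDerivAt.div_const
    apply HasDerivAt.fun_sum
    intro S _
    have h1 : ∀ i ∈ S, HasDerivAt (fun t : ℝ => d i + t * (d i * d i)) (d i * d i) 0 := by
      intro i _
      simpa using ((hasDerivAt_id (0 : ℝ)).mul_const (d i * d i)).const_add (d i)
    have := HasDerivAt.fun_finsetProd h1
    simpa using this
  -- chain-rule derivative of the path
  have hdiff : DifferentiableAt ℝ (normEsymm n m) A := (diff_normEsymm n m) A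
  have hpath : HasDerivAt (fun t : ℝ => A + t • (A * A)) (A * A) 0 := by
    exact (((hasDerivAt_id (0 : ℝ)).smul_const (A * A)).const_add A).congr_deriv (one_smul ℝ _)
  have hF : HasFDerivAt (normEsymm n m) (fderiv ℝ (normEsymm n m) A)
      ((fun t : ℝ => A + t • (A * A)) 0) := by
    simpa using hdiff.hasFDerivAt
  have hcomp : HasDerivAt (fun t : ℝ => normEsymm n m (A + t • (A * A)))
      ((fderiv ℝ (normEsymm n m) A) (A * A)) 0 := by
    have h := hF.comp_hasDerivAt 0 hpath
    exact h
  have hkey : (fderiv ℝ (normEsymm n m) A) (A * A) = L := hcomp.unique hexp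
  -- LHS is the derivative applied to A²
  have hLHS : ∑ i : Fin n, ∑ j : Fin n,
      (fderiv ℝ (normEsymm n m) A) (Matrix.single j i 1) * (A * A) j i
      = (fderiv ℝ (normEsymm n m) A) (A * A) := by
    have hdecomp : A * A = ∑ i : Fin n, ∑ j : Fin n,
        (A * A) j i • Matrix.single j i (1 : ℝ) := by
      rw [Finset.sum_comm]
      conv_lhs => rw [Matrix.matrix_eq_sum_single (A * A)]
      refine Finset.sum_congr rfl fun j _ => Finset.sum_congr rfl fun i _ => ?_
      rw [Matrix.smul_single, smul_eq_mul, mul_one]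
    conv_rhs => rw [hdecomp]
    rw [map_sum]
    refine Finset.sum_congr rfl fun i _ => ?_
    rw [map_sum]
    refine Finset.sum_congr rfl fun j _ => ?_
    rw [ContinuousLinearMap.map_smul, smul_eq_mul, mul_comm]
  rw [hLHS, hkey]
  -- now express everything via eigenvalues
  set S1 : ℝ := ∑ i, d i with hS1def
  set Sm : ℝ := ∑ S ∈ Finset.powersetCard m (Finset.univ : Finset (Fin n)), ∏ i ∈ S, d i
  set Sm1 : ℝ := ∑ S ∈ Finset.powersetCard (m + 1) (Finset.univ : Finset (Fin n)), ∏ i ∈ S, d i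
  have hE1 : normEsymm n 1 A = S1 / n := by
    rw [normEsymm_eigen 1 A hH, Nat.choose_one_right]
    congr 1
    rw [Finset.powersetCard_one]
    rw [Finset.sum_map]
    simp
    rfl
  have hEm : normEsymm n m A = Sm / c := normEsymm_eigen m A hH
  have hEm1 : normEsymm n (m + 1) A = Sm1 / (n.choose (m + 1) : ℝ) := normEsymm_eigen (m + 1) A hH
  rw [hE1, hEm, hEm1, hLdef, key_identity m d, sub_div]
  have hn' : (n : ℝ) ≠ 0 := Nat.cast_ne_zero.mpr hn.ne'
  have hfirst : (n : ℝ) * (S1 / n) * (Sm / c) = S1 * Sm / c := by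
    field_simp
  have hfold : (∑ T ∈ Finset.powersetCard (m + 1) (Finset.univ : Finset (Fin n)),
      ∏ i ∈ T, d i) = Sm1 := rfl
  have hsecond : ((m : ℝ) + 1) * Sm1 / c = ((n : ℝ) - (m : ℝ)) * (Sm1 / (n.choose (m + 1) : ℝ)) := by
    rcases lt_or_ge m n with hmn | hmn
    · have hc0 : c ≠ 0 := by
        rw [hcdef]
        exact Nat.cast_ne_zero.mpr (Nat.choose_pos (le_of_lt hmn)).ne'
      have hc1 : (n.choose (m + 1) : ℝ) ≠ 0 :=
        Nat.cast_ne_zero.mpr (Nat.choose_pos hmn).ne'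
      have hrel : ((n.choose (m + 1) : ℝ)) * ((m : ℝ) + 1) = c * ((n : ℝ) - (m : ℝ)) := by
        have h := Nat.choose_succ_right_eq n m
        have hcast : ((n.choose (m + 1) : ℝ)) * ((m : ℝ) + 1)
            = (n.choose m : ℝ) * (((n - m : ℕ) : ℝ)) := by exact_mod_cast congrArg (Nat.cast : ℕ → ℝ) h
        rw [hcast, Nat.cast_sub (le_of_lt hmn), hcdef]
      field_simp
      linear_combination Sm1 * hrel
    · have h0 : Finset.powersetCard (m + 1) (Finset.univ : Finset (Fin n)) = ∅ := by
        rw [Finset.powersetCard_eq_empty]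
        simp only [Finset.card_univ, Fintype.card_fin]
        omega
      have hz : Sm1 = 0 := by
        rw [← hfold, h0, Finset.sum_empty]
      rw [hz]
      simp
  rw [hfold, hfirst, hsecond]
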